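/- arXiv:math/0611132 — 2 statements merged into one kernel-verified Lean document; each statement's English description precedes it below -/
import Mathlib

section
/- The identity 4·∫₀^{π/2} log(cos x + √(4+cos²x)) dx = ∫₀^{π} log(5 − cos x + √(cos²x − 10cos x + 9)) dx holds. -/
open Real

theorem integral_identity_four :
    4 * ∫ x in (0:ℝ)..(π / 2), Real.log (Real.cos x + Real.sqrt (4 + Real.cos x ^ 2)) =
      ∫ x in (0:ℝ)..π,
        Real.log (5 - Real.cos x + Real.sqrt (Real.cos x ^ 2 - 10 * Real.cos x + 9)) := by
  have hrw : ∫ x in (0:ℝ)..π,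
      Real.log (5 - Real.cos x + Real.sqrt (Real.cos x ^ 2 - 10 * Real.cos x + 9)) =
      ∫ x in (0:ℝ)..π,
        (fun t => 2 * Real.log (Real.sin t + Real.sqrt (4 + Real.sin t ^ 2))) (x / 2) := by
    apply intervalIntegral.integral_congr
    intro x hx
    rw [Set.uIcc_of_le Real.pi_nonneg] at hx
    obtain ⟨hx0, hxπ⟩ := hx
    set s := Real.sin (x / 2) with hs
    have hs0 : 0 ≤ s := Real.sin_nonneg_of_nonneg_of_le_pi (by linarith)
      (by linarith [Real.pi_nonneg])
    have hcos : Real.cos x = 1 - 2 * s ^ 2 := by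
      have h2 : Real.cos (2 * (x / 2)) = 2 * Real.cos (x / 2) ^ 2 - 1 := Real.cos_two_mul _
      have h3 : Real.sin (x / 2) ^ 2 + Real.cos (x / 2) ^ 2 = 1 := Real.sin_sq_add_cos_sq _
      have : (2 : ℝ) * (x / 2) = x := by ring
      rw [this] at h2
      nlinarith
    have hq : (0:ℝ) ≤ 4 + s ^ 2 := by positivity
    have hsq : Real.sqrt (4 + s ^ 2) ^ 2 = 4 + s ^ 2 := Real.sq_sqrt hq
    have hsqnn : 0 ≤ Real.sqrt (4 + s ^ 2) := Real.sqrt_nonneg _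
    have hkey : Real.cos x ^ 2 - 10 * Real.cos x + 9 = (2 * s * Real.sqrt (4 + s ^ 2)) ^ 2 := by
      rw [hcos]; nlinarith
    have hroot : Real.sqrt (Real.cos x ^ 2 - 10 * Real.cos x + 9)
        = 2 * s * Real.sqrt (4 + s ^ 2) := by
      rw [hkey, Real.sqrt_sq (by positivity)]
    have hinner : 5 - Real.cos x + Real.sqrt (Real.cos x ^ 2 - 10 * Real.cos x + 9)
        = (s + Real.sqrt (4 + s ^ 2)) ^ 2 := by
      rw [hroot, hcos]; nlinarith
    have hpos : 0 < s + Real.sqrt (4 + s ^ 2) := by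
      have : (2:ℝ) ≤ Real.sqrt (4 + s ^ 2) := by
        rw [show (2:ℝ) = Real.sqrt 4 by rw [show (4:ℝ) = 2^2 by norm_num, Real.sqrt_sq]; norm_num]
        exact Real.sqrt_le_sqrt (by nlinarith)
      linarith
    simp only [hinner]
    rw [Real.log_pow]
    push_cast
    ring
  have hsub := intervalIntegral.integral_comp_div (a := 0) (b := π) (c := 2)
    (f := fun t => 2 * Real.log (Real.sin t + Real.sqrt (4 + Real.sin t ^ 2))) two_ne_zero
  rw [hrw, hsub]
  norm_num
  have hrefl : ∫ x in (0:ℝ)..(π/2), Real.log (Real.sin x + Real.sqrt (4 + Real.sin x ^ 2))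
      = ∫ x in (0:ℝ)..(π/2), Real.log (Real.cos x + Real.sqrt (4 + Real.cos x ^ 2)) := by
    have := intervalIntegral.integral_comp_sub_left
      (fun t => Real.log (Real.cos t + Real.sqrt (4 + Real.cos t ^ 2))) (π/2)
      (a := 0) (b := π/2)
    simp only [Real.cos_pi_div_two_sub, sub_self, sub_zero] at this
    rw [this]
  rw [hrefl]
  ring
end

section
/- For every y ∈ [0, 2π], ∫₀^{2π} log(10 − 8cos x − 2cos y) dx = 2π·log(5 − cos y + √(cos²y − 10cos y + 9)). -/
/-!
With `p = 10 - 2 cos y` and `q = 8`, write `p - q cos x = ‖a e^{ix} - b‖²` where `a ^ 2 + b ^ 2 = p`,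
`2ab = q` and `|b| ≤ |a|`, so that `a ^ 2 = (p + √(p ^ 2 - q ^ 2)) / 2`. The integral is then `4π`
times the mean of `log ‖z - b‖` over the circle `|z| = |a|`, which is `log |a|` because `b` lies in
the closed disc: `log ‖z - b‖` is harmonic off `b`, and the boundary case `|b| = |a|` (that is,
`y = 0`) is the classical `∫₀^{2π} log |1 - e^{ix}| dx = 0`.
-/

open Real

theorem norm_circleMap_zero_sub_ofReal_sq (R b θ : ℝ) :
    ‖circleMap 0 R θ - b‖ ^ 2 = R ^ 2 + b ^ 2 - 2 * R * b * cos θ := by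
  rw [Complex.sq_norm, Complex.normSq_apply]
  simp only [Complex.sub_re, Complex.sub_im, circleMap_zero_re, circleMap_zero_im,
    Complex.ofReal_re, Complex.ofReal_im]
  linear_combination R ^ 2 * sin_sq_add_cos_sq θ

theorem integral_log_sq_add_sq_sub_mul_cos {a b : ℝ} (h : |b| ≤ |a|) :
    ∫ x in (0:ℝ)..(2 * π), log (a ^ 2 + b ^ 2 - 2 * a * b * cos x) = 2 * π * log (a ^ 2) := by
  have hmean := circleAverage_log_norm_sub_const_of_mem_closedBall
    (c := 0) (R := a) (a := (b : ℂ)) (by simpa using h)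
  rw [circleAverage_def, smul_eq_mul, inv_mul_eq_iff_eq_mul₀ (by positivity)] at hmean
  simp_rw [← norm_circleMap_zero_sub_ofReal_sq, log_pow, intervalIntegral.integral_const_mul,
    hmean]
  push_cast
  ring

theorem integral_log_sub_mul_cos {p q : ℝ} (h : |q| ≤ p) :
    ∫ x in (0:ℝ)..(2 * π), log (p - q * cos x) = 2 * π * log ((p + √(p ^ 2 - q ^ 2)) / 2) := by
  obtain rfl | hp := (abs_nonneg q).trans h |>.eq_or_lt
  · obtain rfl : q = 0 := abs_nonpos_iff.1 h
    simp
  have hs := sq_sqrt (by nlinarith [sq_abs q, abs_nonneg q] : 0 ≤ p ^ 2 - q ^ 2)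
  have hs0 := sqrt_nonneg (p ^ 2 - q ^ 2)
  -- `C` is the larger root of `t ^ 2 - p * t + q ^ 2 / 4`, so `√C ^ 2 + (q / (2 * √C)) ^ 2 = p`.
  set C := (p + √(p ^ 2 - q ^ 2)) / 2
  have hC2 : √C ^ 2 = C := sq_sqrt (by positivity)
  have hC : 0 < √C := sqrt_pos.2 (by positivity)
  have hsplit : ∀ x, p - q * cos x =
      √C ^ 2 + (q / (2 * √C)) ^ 2 - 2 * √C * (q / (2 * √C)) * cos x := by
    intro x
    field_simp
    linear_combination (4 * p - 4 * √C ^ 2 - 4 * C) * hC2 - hs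
  have hle : |q / (2 * √C)| ≤ |√C| := by
    rw [abs_div, abs_mul, abs_two, abs_of_pos hC, div_le_iff₀ (by positivity)]
    linear_combination h + hs0 - 2 * hC2
  simp_rw [hsplit, integral_log_sq_add_sq_sub_mul_cos hle, hC2]

theorem integral_log_F_general (y : ℝ) :
    (∫ x in (0:ℝ)..(2 * π), Real.log (10 - 8 * Real.cos x - 2 * Real.cos y)) =
      2 * π * Real.log (5 - Real.cos y +
        Real.sqrt (Real.cos y ^ 2 - 10 * Real.cos y + 9)) := by
  have h := integral_log_sub_mul_cos (p := 10 - 2 * cos y) (q := 8)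
    (by rw [abs_of_pos (by norm_num)]; linarith [cos_le_one y])
  have hdisc : (10 - 2 * cos y) ^ 2 - 8 ^ 2 = 2 ^ 2 * (cos y ^ 2 - 10 * cos y + 9) := by ring
  rw [hdisc, sqrt_mul (by norm_num), sqrt_sq two_pos.le] at h
  convert h using 3 <;> ring_nf

theorem integral_log_F (y : ℝ) (hy : y ∈ Set.Icc (0:ℝ) (2 * π)) :
    (∫ x in (0:ℝ)..(2 * π), Real.log (10 - 8 * Real.cos x - 2 * Real.cos y)) =
      2 * π * Real.log (5 - Real.cos y +
        Real.sqrt (Real.cos y ^ 2 - 10 * Real.cos y + 9)) :=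
  integral_log_F_general y
end
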